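/- Fix t ≥ 0 and a sequence of multipliers m_k(δ) < 0 (k ≠ 0) depending on δ, satisfying m_k(δ) → −‖k‖² as δ → 0⁺ for each k, and a uniform lower bound −m_k(δ) ≥ C‖k‖^{β−n} (β > n) or −m_k(δ) ≥ C (β ≤ n) for ‖k‖ large, uniformly in δ. Let f ∈ H^{s₁}(Tⁿ), g ∈ H^{s₂}(Tⁿ) and define U^δ(t) and U⁰(t) by the corresponding Fourier series with multipliers m_k(δ) and −‖k‖², respectively. Then, with s₀ = min{s₁, s₂ + min{1, max{0,(β−n)/2}}}, we have ‖U^δ(t) − U⁰(t)‖_{H^{s₀}(Tⁿ)} → 0 as δ → 0⁺. -/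
import Mathlib


open Real Filter
open scoped Topology

/-- Euclidean norm of a lattice point `k ∈ ℤⁿ`. -/
noncomputable def knrm (n : ℕ) (k : Fin n → ℤ) : ℝ :=
  Real.sqrt (∑ i, ((k i : ℝ)) ^ 2)

/-- Fourier coefficient of the solution of the homogeneous nonlocal wave
equation with initial data `f, g` and multipliers `m`. -/
noncomputable def homCoef (n : ℕ) (m : (Fin n → ℤ) → ℝ)
    (fh gh : (Fin n → ℤ) → ℂ) (t : ℝ) (k : Fin n → ℤ) : ℂ :=
  if k = 0 then fh 0 + gh 0 * (t : ℂ)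
  else fh k * (Real.cos (Real.sqrt (-m k) * t) : ℝ) +
    gh k * ((Real.sin (Real.sqrt (-m k) * t) / Real.sqrt (-m k) : ℝ) : ℂ)

lemma knrm_nonneg (n : ℕ) (k : Fin n → ℤ) : 0 ≤ knrm n k := Real.sqrt_nonneg _

lemma one_le_knrm {n : ℕ} {k : Fin n → ℤ} (hk : k ≠ 0) : 1 ≤ knrm n k := by
  obtain ⟨i, hi⟩ := Function.ne_iff.mp hk
  have h1 : (1:ℝ) ≤ ((k i : ℝ)) ^ 2 := by
    have : (1:ℤ) ≤ |k i| := Int.one_le_abs (by simpa using hi)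
    have h2 : (1:ℝ) ≤ |(k i : ℝ)| := by exact_mod_cast this
    nlinarith [sq_abs ((k i : ℝ))]
  have : (1:ℝ) ≤ ∑ j, ((k j : ℝ)) ^ 2 :=
    h1.trans (Finset.single_le_sum (f := fun j => ((k j:ℝ))^2)
      (fun j _ => by positivity) (Finset.mem_univ i))
  exact Real.one_le_sqrt.mpr this

lemma sin_div_abs_le_t {a t : ℝ} (ha : 0 < a) (ht : 0 ≤ t) : |Real.sin (a*t)/a| ≤ t := by
  rw [abs_div, abs_of_pos ha, div_le_iff₀ ha]
  calc |Real.sin (a*t)| ≤ |a*t| := Real.abs_sin_le_abs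
    _ = a*t := abs_of_nonneg (by positivity)
    _ = t*a := mul_comm _ _

lemma sin_div_abs_le_inv {a : ℝ} (t : ℝ) (ha : 0 < a) : |Real.sin (a*t)/a| ≤ 1/a := by
  rw [abs_div, abs_of_pos ha]
  gcongr
  exact Real.abs_sin_le_one _


set_option maxHeartbeats 1000000 in
/-- Convergence of the nonlocal solution `U^δ(t)` to the local solution
`U⁰(t)` in `H^{s₀}(Tⁿ)` as `δ → 0⁺`. -/
theorem stmt15 (n : ℕ) (hn : 1 ≤ n) (β : ℝ) (hβ : β < (n : ℝ) + 4)
    (s₁ s₂ : ℝ) (fh gh : (Fin n → ℤ) → ℂ)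
    (hf : Summable (fun k : Fin n → ℤ => (1 + knrm n k ^ 2) ^ s₁ * ‖fh k‖ ^ 2))
    (hg : Summable (fun k : Fin n → ℤ => (1 + knrm n k ^ 2) ^ s₂ * ‖gh k‖ ^ 2))
    (m : ℝ → (Fin n → ℤ) → ℝ)
    (hmneg : ∀ δ : ℝ, 0 < δ → ∀ k : Fin n → ℤ, k ≠ 0 → m δ k < 0)
    (hmlim : ∀ k : Fin n → ℤ,
      Tendsto (fun δ => m δ k) (𝓝[>] (0 : ℝ)) (𝓝 (-(knrm n k ^ 2))))
    (hunif : ∃ C > (0 : ℝ), ∃ R : ℝ, ∀ δ : ℝ, 0 < δ → ∀ k : Fin n → ℤ,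
      R ≤ knrm n k →
        (if (n : ℝ) < β then C * knrm n k ^ (β - n) else C) ≤ -(m δ k))
    (t : ℝ) (ht : 0 ≤ t)
    (s₀ : ℝ) (hs₀ : s₀ = min s₁ (s₂ + min 1 (max 0 ((β - n) / 2)))) :
    (∀ δ : ℝ, 0 < δ → Summable (fun k : Fin n → ℤ =>
        (1 + knrm n k ^ 2) ^ s₀ *
          ‖homCoef n (m δ) fh gh t k -
            homCoef n (fun k => -(knrm n k ^ 2)) fh gh t k‖ ^ 2)) ∧
      Tendsto (fun δ : ℝ => ∑' k : Fin n → ℤ,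
          (1 + knrm n k ^ 2) ^ s₀ *
            ‖homCoef n (m δ) fh gh t k -
              homCoef n (fun k => -(knrm n k ^ 2)) fh gh t k‖ ^ 2)
        (𝓝[>] (0 : ℝ)) (𝓝 0) := by
  obtain ⟨C, hC, R, hR⟩ := hunif
  set α : ℝ := min 1 (max 0 ((β - n) / 2)) with hαdef
  have hα0 : 0 ≤ α := le_min zero_le_one (le_max_left _ _)
  have hα1 : α ≤ 1 := min_le_left _ _
  have hs01 : s₀ ≤ s₁ := hs₀ ▸ min_le_left _ _
  have hs02 : s₀ - s₂ ≤ α := by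
    have := hs₀ ▸ min_le_right s₁ (s₂ + α); linarith
  set R' : ℝ := max R 1 with hR'def
  have hR'1 : 1 ≤ R' := le_max_right _ _
  set M : ℝ := max ((1 + R' ^ 2) * (2 * t) ^ 2) (2 * (1 / Real.sqrt C + 1) ^ 2) with hMdef
  have hM0 : 0 ≤ M := le_trans (by positivity) (le_max_right _ _)
  set D : (Fin n → ℤ) → ℝ := fun k =>
    8 * ((1 + knrm n k ^ 2) ^ s₁ * ‖fh k‖ ^ 2) +
    2 * M * ((1 + knrm n k ^ 2) ^ s₂ * ‖gh k‖ ^ 2) with hDdef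
  have hD : Summable D := (hf.mul_left 8).add (hg.mul_left (2 * M))
  have hD0 : ∀ k, 0 ≤ D k := fun k => by
    have := knrm_nonneg n k; positivity
  -- pointwise bound
  have hbound : ∀ δ : ℝ, 0 < δ → ∀ k : Fin n → ℤ,
      (1 + knrm n k ^ 2) ^ s₀ *
        ‖homCoef n (m δ) fh gh t k -
          homCoef n (fun k => -(knrm n k ^ 2)) fh gh t k‖ ^ 2 ≤ D k := by
    intro δ hδ k
    by_cases hk : k = 0
    · subst hk
      simp only [homCoef, if_pos rfl, sub_self, norm_zero]
      simpa using hD0 0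
    · set b : ℝ := knrm n k with hbdef
      have hb1 : 1 ≤ b := one_le_knrm hk
      have hb0 : 0 < b := lt_of_lt_of_le one_pos hb1
      set a : ℝ := Real.sqrt (-(m δ k)) with hadef
      have hmk : 0 < -(m δ k) := by linarith [hmneg δ hδ k hk]
      have ha0 : 0 < a := Real.sqrt_pos.mpr hmk
      have ha2 : a ^ 2 = -(m δ k) := Real.sq_sqrt hmk.le
      have hw1 : (1:ℝ) ≤ 1 + b ^ 2 := by nlinarith
      have hw0 : (0:ℝ) < 1 + b ^ 2 := by linarith
      set E : ℝ := Real.sin (a * t) / a - Real.sin (b * t) / b with hEdef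
      -- rewrite difference
      have hdiff : homCoef n (m δ) fh gh t k -
          homCoef n (fun k => -(knrm n k ^ 2)) fh gh t k =
          fh k * ((Real.cos (a * t) - Real.cos (b * t) : ℝ) : ℂ) + gh k * (E : ℂ) := by
        simp only [homCoef, if_neg hk, hEdef]
        rw [neg_neg, Real.sqrt_sq (knrm_nonneg n k)]
        push_cast
        ring
      have hnd : ‖homCoef n (m δ) fh gh t k -
          homCoef n (fun k => -(knrm n k ^ 2)) fh gh t k‖ ≤ 2 * ‖fh k‖ + |E| * ‖gh k‖ := by
        rw [hdiff]
        calc ‖fh k * ((Real.cos (a * t) - Real.cos (b * t) : ℝ) : ℂ) + gh k * (E : ℂ)‖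
            ≤ ‖fh k * ((Real.cos (a * t) - Real.cos (b * t) : ℝ) : ℂ)‖ + ‖gh k * (E : ℂ)‖ :=
              norm_add_le _ _
          _ = ‖fh k‖ * |Real.cos (a * t) - Real.cos (b * t)| + ‖gh k‖ * |E| := by
              rw [norm_mul, norm_mul, Complex.norm_real, Complex.norm_real,
                Real.norm_eq_abs, Real.norm_eq_abs]
          _ ≤ ‖fh k‖ * 2 + ‖gh k‖ * |E| := by
              gcongr
              have h1 := Real.cos_le_one (a * t)
              have h2 := Real.neg_one_le_cos (a * t)
              have h3 := Real.cos_le_one (b * t)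
              have h4 := Real.neg_one_le_cos (b * t)
              rw [abs_le]; constructor <;> linarith
          _ = 2 * ‖fh k‖ + |E| * ‖gh k‖ := by ring
      -- key uniform estimate
      have hEw : (1 + b ^ 2) ^ α * |E| ^ 2 ≤ M := by
        by_cases hbR : b < R'
        · -- small frequencies: |E| ≤ 2t
          have hE2t : |E| ≤ 2 * t := by
            calc |E| ≤ |Real.sin (a*t)/a| + |Real.sin (b*t)/b| := abs_sub _ _
              _ ≤ t + t := add_le_add (sin_div_abs_le_t ha0 ht) (sin_div_abs_le_t hb0 ht)
              _ = 2 * t := by ring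
          have hwle : (1 + b ^ 2) ^ α ≤ 1 + R' ^ 2 := by
            calc (1 + b ^ 2) ^ α ≤ (1 + b ^ 2) ^ (1:ℝ) :=
                  Real.rpow_le_rpow_of_exponent_le hw1 hα1
              _ = 1 + b ^ 2 := Real.rpow_one _
              _ ≤ 1 + R' ^ 2 := by nlinarith
          calc (1 + b ^ 2) ^ α * |E| ^ 2 ≤ (1 + R' ^ 2) * (2 * t) ^ 2 := by
                apply mul_le_mul hwle (by
                  exact pow_le_pow_left₀ (abs_nonneg _) hE2t 2) (by positivity) (by positivity)
            _ ≤ M := le_max_left _ _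
        · push_neg at hbR
          have hmb := hR δ hδ k (le_trans (le_max_left R 1) hbR)
          have hsC : 0 < Real.sqrt C := Real.sqrt_pos.mpr hC
          have hEab : |E| ≤ 1/a + 1/b :=
            (abs_sub _ _).trans (add_le_add (sin_div_abs_le_inv t ha0) (sin_div_abs_le_inv t hb0))
          by_cases hnβ : (n:ℝ) < β
          · rw [if_pos hnβ] at hmb
            have hαeq : α = min 1 ((β - n)/2) := by
              rw [hαdef, max_eq_right (by linarith)]
            have hαle : α ≤ (β - n)/2 := hαeq ▸ min_le_right _ _
            -- lower bound on a
            have hage : Real.sqrt C * b ^ ((β - n)/2) ≤ a := by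
              have h1 : Real.sqrt (C * b ^ (β - n)) ≤ a := by
                apply Real.sqrt_le_sqrt; linarith
              have hsq : (b ^ ((β - n)/2)) ^ 2 = b ^ (β - n) := by
                rw [← Real.rpow_natCast (b ^ ((β - n)/2)) 2, ← Real.rpow_mul hb0.le]
                norm_num
              have h2 : Real.sqrt (C * b ^ (β - n)) = Real.sqrt C * b ^ ((β - n)/2) := by
                rw [Real.sqrt_mul hC.le, ← hsq,
                  Real.sqrt_sq (Real.rpow_nonneg hb0.le _)]
              linarith [h2 ▸ h1]
            have hbpow : (0:ℝ) < b ^ ((β - n)/2) := Real.rpow_pos_of_pos hb0 _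
            have h1a : 1/a ≤ (1/Real.sqrt C) * b ^ (-α) := by
              calc 1/a ≤ 1/(Real.sqrt C * b ^ ((β - n)/2)) := by
                    apply one_div_le_one_div_of_le (by positivity) hage
                _ = (1/Real.sqrt C) * b ^ (-((β - n)/2)) := by
                    rw [Real.rpow_neg hb0.le]; field_simp
                _ ≤ (1/Real.sqrt C) * b ^ (-α) :=
                    mul_le_mul_of_nonneg_left
                      (Real.rpow_le_rpow_of_exponent_le hb1 (by linarith)) (by positivity)
            have h1b : 1/b ≤ b ^ (-α) := by
              rw [one_div, ← Real.rpow_neg_one]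
              exact Real.rpow_le_rpow_of_exponent_le hb1 (by linarith)
            have hEb : |E| ≤ (1/Real.sqrt C + 1) * b ^ (-α) := by
              calc |E| ≤ 1/a + 1/b := hEab
                _ ≤ (1/Real.sqrt C) * b ^ (-α) + b ^ (-α) := add_le_add h1a h1b
                _ = (1/Real.sqrt C + 1) * b ^ (-α) := by ring
            have hbnegpow : (0:ℝ) < b ^ (-α) := Real.rpow_pos_of_pos hb0 _
            -- (1+b^2)^α ≤ 2^α * (b^α)^2
            have hwb : (1 + b ^ 2) ^ α ≤ 2 ^ α * (b ^ α) ^ 2 := by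
              have h2 : (1:ℝ) + b ^ 2 ≤ 2 * b ^ 2 := by nlinarith
              calc (1 + b ^ 2) ^ α ≤ (2 * b ^ 2) ^ α :=
                    Real.rpow_le_rpow (by positivity) h2 hα0
                _ = 2 ^ α * (b ^ 2) ^ α := Real.mul_rpow (by norm_num) (by positivity)
                _ = 2 ^ α * (b ^ α) ^ 2 := by
                    congr 1
                    rw [← Real.rpow_natCast b 2, ← Real.rpow_mul hb0.le,
                      ← Real.rpow_natCast (b ^ α) 2, ← Real.rpow_mul hb0.le]
                    ring_nf
            have hcancel : (b ^ α) * (b ^ (-α)) = 1 := by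
              rw [← Real.rpow_add hb0]; simp
            have h2α : (2:ℝ) ^ α ≤ 2 := by
              calc (2:ℝ) ^ α ≤ (2:ℝ) ^ (1:ℝ) :=
                    Real.rpow_le_rpow_of_exponent_le one_le_two hα1
                _ = 2 := Real.rpow_one _
            calc (1 + b ^ 2) ^ α * |E| ^ 2
                ≤ (2 ^ α * (b ^ α) ^ 2) * ((1/Real.sqrt C + 1) * b ^ (-α)) ^ 2 := by
                  apply mul_le_mul hwb (pow_le_pow_left₀ (abs_nonneg _) hEb 2)
                    (by positivity) (by positivity)
              _ = 2 ^ α * (1/Real.sqrt C + 1) ^ 2 * ((b ^ α) * (b ^ (-α))) ^ 2 := by ring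
              _ = 2 ^ α * (1/Real.sqrt C + 1) ^ 2 := by rw [hcancel]; ring
              _ ≤ 2 * (1/Real.sqrt C + 1) ^ 2 := by
                  apply mul_le_mul_of_nonneg_right h2α (by positivity)
              _ ≤ M := le_max_right _ _
          · rw [if_neg hnβ] at hmb
            push_neg at hnβ
            have hαeq : α = 0 := by
              rw [hαdef, max_eq_left (by linarith), min_eq_right zero_le_one]
            have haC : Real.sqrt C ≤ a := by
              apply Real.sqrt_le_sqrt; linarith
            have hEb : |E| ≤ 1/Real.sqrt C + 1 := by
              calc |E| ≤ 1/a + 1/b := hEab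
                _ ≤ 1/Real.sqrt C + 1 :=
                    add_le_add (one_div_le_one_div_of_le hsC haC)
                      (by rw [div_le_one hb0]; exact hb1)
            rw [hαeq, Real.rpow_zero, one_mul]
            calc |E| ^ 2 ≤ (1/Real.sqrt C + 1) ^ 2 := pow_le_pow_left₀ (abs_nonneg _) hEb 2
              _ ≤ 2 * (1/Real.sqrt C + 1) ^ 2 := by nlinarith [sq_nonneg (1/Real.sqrt C + 1)]
              _ ≤ M := le_max_right _ _
      -- assemble
      have hA1 : (1 + b ^ 2) ^ s₀ ≤ (1 + b ^ 2) ^ s₁ :=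
        Real.rpow_le_rpow_of_exponent_le hw1 hs01
      have hA2 : (1 + b ^ 2) ^ s₀ * |E| ^ 2 ≤ M * (1 + b ^ 2) ^ s₂ := by
        have hsplit : (1 + b ^ 2) ^ s₀ = (1 + b ^ 2) ^ s₂ * (1 + b ^ 2) ^ (s₀ - s₂) := by
          rw [← Real.rpow_add hw0]; congr 1; ring
        have hle : (1 + b ^ 2) ^ (s₀ - s₂) ≤ (1 + b ^ 2) ^ α :=
          Real.rpow_le_rpow_of_exponent_le hw1 hs02
        calc (1 + b ^ 2) ^ s₀ * |E| ^ 2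
            = (1 + b ^ 2) ^ s₂ * ((1 + b ^ 2) ^ (s₀ - s₂) * |E| ^ 2) := by rw [hsplit]; ring
          _ ≤ (1 + b ^ 2) ^ s₂ * ((1 + b ^ 2) ^ α * |E| ^ 2) := by
              apply mul_le_mul_of_nonneg_left _ (by positivity)
              exact mul_le_mul_of_nonneg_right hle (by positivity)
          _ ≤ (1 + b ^ 2) ^ s₂ * M := mul_le_mul_of_nonneg_left hEw (by positivity)
          _ = M * (1 + b ^ 2) ^ s₂ := mul_comm _ _
      have hA3 : ‖homCoef n (m δ) fh gh t k -
          homCoef n (fun k => -(knrm n k ^ 2)) fh gh t k‖ ^ 2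
          ≤ 8 * ‖fh k‖ ^ 2 + 2 * |E| ^ 2 * ‖gh k‖ ^ 2 := by
        have h0 := norm_nonneg (homCoef n (m δ) fh gh t k -
          homCoef n (fun k => -(knrm n k ^ 2)) fh gh t k)
        nlinarith [hnd, sq_nonneg (2 * ‖fh k‖ - |E| * ‖gh k‖), norm_nonneg (fh k),
          norm_nonneg (gh k), abs_nonneg E]
      have hwpos : (0:ℝ) < (1 + b ^ 2) ^ s₀ := Real.rpow_pos_of_pos hw0 _
      rw [hDdef]
      simp only [← hbdef]
      nlinarith [mul_le_mul_of_nonneg_left hA3 hwpos.le,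
        mul_le_mul_of_nonneg_right hA1 (sq_nonneg ‖fh k‖),
        mul_le_mul_of_nonneg_right hA2 (sq_nonneg ‖gh k‖), sq_nonneg ‖gh k‖,
        hwpos.le, sq_nonneg (|E|)]
  -- pointwise limit
  have hFnn : ∀ (δ : ℝ) (k : Fin n → ℤ), 0 ≤ (1 + knrm n k ^ 2) ^ s₀ *
      ‖homCoef n (m δ) fh gh t k - homCoef n (fun k => -(knrm n k ^ 2)) fh gh t k‖ ^ 2 := by
    intro δ k; positivity
  have hlim : ∀ k : Fin n → ℤ, Tendsto (fun δ => (1 + knrm n k ^ 2) ^ s₀ *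
      ‖homCoef n (m δ) fh gh t k - homCoef n (fun k => -(knrm n k ^ 2)) fh gh t k‖ ^ 2)
      (𝓝[>] (0:ℝ)) (𝓝 0) := by
    intro k
    by_cases hk : k = 0
    · subst hk
      simp only [homCoef, if_pos rfl, sub_self, norm_zero]
      simpa using tendsto_const_nhds
    · have hb1 : 1 ≤ knrm n k := one_le_knrm hk
      have hb0 : 0 < knrm n k := lt_of_lt_of_le one_pos hb1
      have h1 : Tendsto (fun δ => Real.sqrt (-(m δ k))) (𝓝[>] (0:ℝ)) (𝓝 (knrm n k)) := by
        have h2 : Tendsto (fun δ => -(m δ k)) (𝓝[>] (0:ℝ)) (𝓝 (knrm n k ^ 2)) := by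
          simpa using (hmlim k).neg
        have := (Real.continuous_sqrt.tendsto (knrm n k ^ 2)).comp h2
        rwa [Real.sqrt_sq (knrm_nonneg n k)] at this
      have hU : Tendsto (fun δ => homCoef n (m δ) fh gh t k) (𝓝[>] (0:ℝ))
          (𝓝 (homCoef n (fun k => -(knrm n k ^ 2)) fh gh t k)) := by
        simp only [homCoef, if_neg hk, neg_neg, Real.sqrt_sq (knrm_nonneg n k)]
        have hcos : Tendsto (fun δ => Real.cos (Real.sqrt (-(m δ k)) * t)) (𝓝[>] (0:ℝ))
            (𝓝 (Real.cos (knrm n k * t))) :=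
          (Real.continuous_cos.tendsto _).comp (h1.mul_const t)
        have hsin : Tendsto (fun δ => Real.sin (Real.sqrt (-(m δ k)) * t) / Real.sqrt (-(m δ k)))
            (𝓝[>] (0:ℝ)) (𝓝 (Real.sin (knrm n k * t) / knrm n k)) :=
          ((Real.continuous_sin.tendsto _).comp (h1.mul_const t)).div h1 hb0.ne'
        exact (tendsto_const_nhds.mul ((Complex.continuous_ofReal.tendsto _).comp hcos)).add
          (tendsto_const_nhds.mul ((Complex.continuous_ofReal.tendsto _).comp hsin))
      have hz : Tendsto (fun δ => homCoef n (m δ) fh gh t k -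
          homCoef n (fun k => -(knrm n k ^ 2)) fh gh t k) (𝓝[>] (0:ℝ)) (𝓝 0) := by
        have := hU.sub_const (homCoef n (fun k => -(knrm n k ^ 2)) fh gh t k)
        rwa [sub_self] at this
      have := ((hz.norm.pow 2).const_mul ((1 + knrm n k ^ 2) ^ s₀))
      simpa using this
  constructor
  · intro δ hδ
    exact Summable.of_nonneg_of_le (hFnn δ) (hbound δ hδ) hD
  · have hmain := tendsto_tsum_of_dominated_convergence (f := fun δ (k : Fin n → ℤ) =>
        (1 + knrm n k ^ 2) ^ s₀ *
          ‖homCoef n (m δ) fh gh t k - homCoef n (fun k => -(knrm n k ^ 2)) fh gh t k‖ ^ 2)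
        (g := fun _ => (0:ℝ)) hD hlim ?_
    · simpa using hmain
    · filter_upwards [self_mem_nhdsWithin] with δ hδ
      intro k
      rw [Real.norm_eq_abs, abs_of_nonneg (hFnn δ k)]
      exact hbound δ hδ k
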